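/- arXiv:1504.07596 — 2 statements merged into one kernel-verified Lean document; each statement's English description precedes it below -/
import Mathlib

section
/- The matrix M(σ_1) (identity except M(σ_1)_{1,1}=−t, M(σ_1)_{1,2}=t, M(σ_1)_{1,n}=s^{−1}) equals M(ρ)·M(σ_n)·M(ρ)^{−1}, where M(σ_n) is the identity except M(σ_n)_{n,1}=ts, M(σ_n)_{n,n−1}=1, M(σ_n)_{n,n}=−t, and M(ρ) is the cyclic matrix with M(ρ)_{i+1,i}=1 (1≤i≤n−1), M(ρ)_{1,n}=s^{−1}. -/
open LaurentPolynomial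

noncomputable section

/-- The ring `ℤ[t^{±1}, s^{±1}]` of Laurent polynomials in two variables. -/
abbrev L2 : Type := LaurentPolynomial (LaurentPolynomial ℤ)

/-- The variable `t`. -/
def tt : L2 := LaurentPolynomial.C (T 1)

/-- The variable `s`. -/
def ss : L2 := T 1

/-- The inverse `s⁻¹`. -/
def ssInv : L2 := T (-1)

/-- `M(σ_i)` for `2 ≤ i ≤ n-1` (paper's 1-based index `i`): identity except
row `i` which has entries `1, -t, -t` in columns `i-1, i, i+1`. -/
def Msig (n i : ℕ) : Matrix (Fin n) (Fin n) L2 :=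
  Matrix.of fun a b =>
    if (a : ℕ) + 1 = i then
      if (b : ℕ) + 2 = i then 1
      else if (b : ℕ) + 1 = i then -tt
      else if (b : ℕ) = i then -tt
      else 0
    else if a = b then 1 else 0

/-- The matrix `M(ρ)`. -/
def Mrho (n : ℕ) : Matrix (Fin n) (Fin n) L2 :=
  Matrix.of fun i j =>
    if (i : ℕ) = (j : ℕ) + 1 then 1
    else if (i : ℕ) = 0 ∧ (j : ℕ) = n - 1 then ssInv
    else 0

/-- `M(σ_1)`: identity except `M(σ_1)_{1,1} = -t`, `M(σ_1)_{1,2} = t`, `M(σ_1)_{1,n} = s⁻¹`. -/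
def Msig1 (n : ℕ) : Matrix (Fin n) (Fin n) L2 :=
  Matrix.of fun a b =>
    if (a : ℕ) = 0 then
      if (b : ℕ) = 0 then -tt
      else if (b : ℕ) = 1 then tt
      else if (b : ℕ) = n - 1 then ssInv
      else 0
    else if a = b then 1 else 0

/-- `M(σ_n)`: identity except `M(σ_n)_{n,1} = ts`, `M(σ_n)_{n,n-1} = 1`, `M(σ_n)_{n,n} = -t`. -/
def Msign (n : ℕ) : Matrix (Fin n) (Fin n) L2 :=
  Matrix.of fun a b =>
    if (a : ℕ) = n - 1 then
      if (b : ℕ) = 0 then tt * ss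
      else if (b : ℕ) = n - 2 then 1
      else if (b : ℕ) = n - 1 then -tt
      else 0
    else if a = b then 1 else 0

lemma ssInv_mul_ss : ssInv * ss = 1 := by
  rw [ss, ssInv, ← T_add]; norm_num

/-- Explicit inverse of `Mrho`. -/
def MrhoInv (n : ℕ) : Matrix (Fin n) (Fin n) L2 :=
  Matrix.of fun i j =>
    if (j : ℕ) = (i : ℕ) + 1 then 1
    else if (i : ℕ) = n - 1 ∧ (j : ℕ) = 0 then ss
    else 0

lemma mul_mrho {n : ℕ} (hn : 1 ≤ n) (M : Matrix (Fin n) (Fin n) L2) (a c : Fin n) :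
    (M * Mrho n) a c =
      if h : (c : ℕ) = n - 1 then M a ⟨0, by omega⟩ * ssInv
      else M a ⟨(c : ℕ) + 1, by omega⟩ := by
  rw [Matrix.mul_apply]
  split
  case isTrue h =>
    rw [Finset.sum_eq_single (⟨0, by omega⟩ : Fin n)]
    · simp only [Mrho, Matrix.of_apply, Fin.val_mk]
      rw [if_neg (by omega)]
      simp [h]
    · intro b _ hb
      have hb' : (b : ℕ) ≠ 0 := fun hh => hb (Fin.ext hh)
      simp only [Mrho, Matrix.of_apply]
      rw [if_neg (by omega), if_neg (by tauto), mul_zero]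
    · intro hmem; exact absurd (Finset.mem_univ _) hmem
  case isFalse h =>
    rw [Finset.sum_eq_single (⟨(c : ℕ) + 1, by omega⟩ : Fin n)]
    · simp only [Mrho, Matrix.of_apply, Fin.val_mk]
      simp
    · intro b _ hb
      have hb' : (b : ℕ) ≠ (c : ℕ) + 1 := fun hh => hb (Fin.ext (by simpa using hh))
      simp only [Mrho, Matrix.of_apply]
      rw [if_neg hb', if_neg (by omega), mul_zero]
    · intro hmem; exact absurd (Finset.mem_univ _) hmem

lemma mrho_mul {n : ℕ} (hn : 1 ≤ n) (M : Matrix (Fin n) (Fin n) L2) (a c : Fin n) :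
    (Mrho n * M) a c =
      if h : (a : ℕ) = 0 then ssInv * M ⟨n - 1, by omega⟩ c
      else M ⟨(a : ℕ) - 1, by omega⟩ c := by
  rw [Matrix.mul_apply]
  split
  case isTrue h =>
    rw [Finset.sum_eq_single (⟨n - 1, by omega⟩ : Fin n)]
    · simp only [Mrho, Matrix.of_apply, Fin.val_mk]
      rw [if_neg (by omega)]
      simp [h]
    · intro b _ hb
      have hb' : (b : ℕ) ≠ n - 1 := fun hh => hb (Fin.ext hh)
      simp only [Mrho, Matrix.of_apply, Fin.val_mk]
      rw [if_neg (by omega), if_neg (by tauto), zero_mul]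
    · intro hmem; exact absurd (Finset.mem_univ _) hmem
  case isFalse h =>
    rw [Finset.sum_eq_single (⟨(a : ℕ) - 1, by omega⟩ : Fin n)]
    · simp only [Mrho, Matrix.of_apply, Fin.val_mk]
      rw [if_pos (by omega), one_mul]
    · intro b _ hb
      have hb' : (b : ℕ) ≠ (a : ℕ) - 1 := fun hh => hb (Fin.ext (by simpa using hh))
      simp only [Mrho, Matrix.of_apply, Fin.val_mk]
      rw [if_neg (by omega), if_neg (by omega), zero_mul]
    · intro hmem; exact absurd (Finset.mem_univ _) hmem

lemma mrho_mul_inv {n : ℕ} (hn : 1 ≤ n) : Mrho n * MrhoInv n = 1 := by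
  funext a c
  rw [mrho_mul hn]
  simp only [MrhoInv, Matrix.of_apply, Matrix.one_apply, Fin.val_mk, Fin.ext_iff, true_and, and_true]
  split_ifs <;>
    first
      | rfl
      | omega
      | tauto
      | (exact ssInv_mul_ss)
      | simp

lemma mrho_inv_eq {n : ℕ} (hn : 1 ≤ n) : (Mrho n)⁻¹ = MrhoInv n :=
  Matrix.inv_eq_right_inv (mrho_mul_inv hn)

/-- `M(σ_1) = M(ρ) · M(σ_n) · M(ρ)⁻¹`. -/
theorem stmt4 (n : ℕ) (hn : 3 ≤ n) :
    Msig1 n = Mrho n * Msign n * (Mrho n)⁻¹ := by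
  have hn1 : 1 ≤ n := by omega
  have hts : ssInv * (tt * ss) = tt := by
    rw [mul_comm tt ss, ← mul_assoc, ssInv_mul_ss, one_mul]
  have key : Msig1 n * Mrho n = Mrho n * Msign n := by
    funext a c
    rw [mul_mrho hn1, mrho_mul hn1]
    simp only [Msig1, Msign, Matrix.of_apply, Fin.val_mk, Fin.ext_iff, true_and, and_true]
    split_ifs <;>
      first
        | rfl
        | omega
        | contradiction
        | (exact hts.symm)
        | ring
  rw [mrho_inv_eq hn1, ← key, mul_assoc, mrho_mul_inv hn1, mul_one]

end
end

section
/- In the algebra R_n, every path of length ≥ 3 is zero; equivalently, the ideal of paths of positive length is nilpotent of nilpotency index 3 (its cube is zero). -/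
/-- Generators of the path algebra of the cyclic quiver on `n` vertices:
`e i` is the constant path `(i)` at vertex `i`, `a i` the arrow `(i|i+1)`,
`b i` the arrow `(i+1|i)` (indices in `Fin n`, i.e. mod `n`). -/
inductive Gen (n : ℕ) : Type
  | e : Fin n → Gen n
  | a : Fin n → Gen n
  | b : Fin n → Gen n

/-- The generator `(i)` in the free algebra. -/
noncomputable def Ev (n : ℕ) (i : Fin n) : FreeAlgebra ℤ (Gen n) := FreeAlgebra.ι ℤ (Gen.e i)

/-- The generator `(i|i+1)` in the free algebra. -/
noncomputable def Av (n : ℕ) (i : Fin n) : FreeAlgebra ℤ (Gen n) := FreeAlgebra.ι ℤ (Gen.a i)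

/-- The generator `(i+1|i)` in the free algebra. -/
noncomputable def Bv (n : ℕ) (i : Fin n) : FreeAlgebra ℤ (Gen n) := FreeAlgebra.ι ℤ (Gen.b i)

/-- The defining relations of `R_n`: the path-algebra relations (the `(i)` are
orthogonal idempotents summing to `1` and the arrows compose as paths of the cyclic
quiver), together with the quiver-algebra relations
`(i|i+1|i) = (i|i-1|i)` and `(i-1|i|i+1) = (i+1|i|i-1) = 0` (indices mod `n`). -/
inductive QRel (n : ℕ) [NeZero n] : FreeAlgebra ℤ (Gen n) → FreeAlgebra ℤ (Gen n) → Prop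
  | idem (i : Fin n) : QRel n (Ev n i * Ev n i) (Ev n i)
  | orth (i j : Fin n) (h : i ≠ j) : QRel n (Ev n i * Ev n j) 0
  | sum_eq_one : QRel n (∑ i, Ev n i) 1
  | eA (i : Fin n) : QRel n (Ev n i * Av n i) (Av n i)
  | Ae (i : Fin n) : QRel n (Av n i * Ev n (i + 1)) (Av n i)
  | eB (i : Fin n) : QRel n (Ev n (i + 1) * Bv n i) (Bv n i)
  | Be (i : Fin n) : QRel n (Bv n i * Ev n i) (Bv n i)
  | loop (i : Fin n) : QRel n (Av n i * Bv n i) (Bv n (i - 1) * Av n (i - 1))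
  | aa (i : Fin n) : QRel n (Av n (i - 1) * Av n i) 0
  | bb (i : Fin n) : QRel n (Bv n i * Bv n (i - 1)) 0

/-- The algebra `R_n`: the quotient of the path algebra of the cyclic quiver on `n`
vertices by the relations `(i|i+1|i) = (i|i-1|i)`, `(i-1|i|i+1) = (i+1|i|i-1) = 0`. -/
abbrev Rn (n : ℕ) [NeZero n] : Type := RingQuot (QRel n)

/-- The constant path `(i)` in `R_n`. -/
noncomputable def ee (n : ℕ) [NeZero n] (i : Fin n) : Rn n :=
  RingQuot.mkRingHom (QRel n) (Ev n i)

/-- The path `(i|i+1)` in `R_n`. -/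
noncomputable def aA (n : ℕ) [NeZero n] (i : Fin n) : Rn n :=
  RingQuot.mkRingHom (QRel n) (Av n i)

/-- The path `(i+1|i)` in `R_n`. -/
noncomputable def bB (n : ℕ) [NeZero n] (i : Fin n) : Rn n :=
  RingQuot.mkRingHom (QRel n) (Bv n i)

section Aux
variable {n : ℕ} [NeZero n]

private lemma rel {x y : FreeAlgebra ℤ (Gen n)} (h : QRel n x y) :
    RingQuot.mkRingHom (QRel n) x = RingQuot.mkRingHom (QRel n) y := RingQuot.mkRingHom_rel h

private lemma eO {i j : Fin n} (h : i ≠ j) : ee n i * ee n j = 0 := by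
  rw [ee, ee, ← map_mul, rel (QRel.orth i j h), map_zero]

private lemma eAs (i : Fin n) : ee n i * aA n i = aA n i := by
  rw [ee, aA, ← map_mul]; exact rel (QRel.eA i)

private lemma aEs (i : Fin n) : aA n i * ee n (i + 1) = aA n i := by
  rw [ee, aA, ← map_mul]; exact rel (QRel.Ae i)

private lemma eBs (i : Fin n) : ee n (i + 1) * bB n i = bB n i := by
  rw [ee, bB, ← map_mul]; exact rel (QRel.eB i)

private lemma bEs (i : Fin n) : bB n i * ee n i = bB n i := by
  rw [ee, bB, ← map_mul]; exact rel (QRel.Be i)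

private lemma loopR (i : Fin n) : aA n i * bB n i = bB n (i - 1) * aA n (i - 1) := by
  rw [aA, bB, aA, bB, ← map_mul, ← map_mul]; exact rel (QRel.loop i)

private lemma aaR (i : Fin n) : aA n (i - 1) * aA n i = 0 := by
  rw [aA, aA, ← map_mul, rel (QRel.aa i), map_zero]

private lemma bbR (i : Fin n) : bB n i * bB n (i - 1) = 0 := by
  rw [bB, bB, ← map_mul, rel (QRel.bb i), map_zero]

private lemma AE {i j : Fin n} (h : j ≠ i + 1) : aA n i * ee n j = 0 := by
  conv_lhs => rw [← aEs i]
  rw [mul_assoc, eO (Ne.symm h), mul_zero]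

private lemma EA {i j : Fin n} (h : j ≠ i) : ee n j * aA n i = 0 := by
  conv_lhs => rw [← eAs i]
  rw [← mul_assoc, eO h, zero_mul]

private lemma BE {i j : Fin n} (h : j ≠ i) : bB n i * ee n j = 0 := by
  conv_lhs => rw [← bEs i]
  rw [mul_assoc, eO (Ne.symm h), mul_zero]

private lemma AA (i j : Fin n) : aA n i * aA n j = 0 := by
  rcases eq_or_ne j (i + 1) with rfl | h
  · have h2 := aaR (n := n) (i + 1)
    rwa [add_sub_cancel_right] at h2
  · conv_lhs => rw [← eAs j]
    rw [← mul_assoc, AE h, zero_mul]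

private lemma BB (i j : Fin n) : bB n i * bB n j = 0 := by
  rcases eq_or_ne j (i - 1) with rfl | h
  · exact bbR i
  · conv_lhs => rw [← eBs j]
    rw [← mul_assoc, BE (fun hc => h (by rw [← hc, add_sub_cancel_right])), zero_mul]

private lemma AB {i j : Fin n} (h : j ≠ i) : aA n i * bB n j = 0 := by
  conv_lhs => rw [← eBs j]
  rw [← mul_assoc, AE (fun hc => h (add_right_cancel hc)), zero_mul]

private lemma BA {i j : Fin n} (h : j ≠ i) : bB n i * aA n j = 0 := by
  conv_lhs => rw [← eAs j]
  rw [← mul_assoc, BE h, zero_mul]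

private lemma BAs (i : Fin n) : bB n i * aA n i = aA n (i + 1) * bB n (i + 1) := by
  have h2 := loopR (n := n) (i + 1)
  rw [add_sub_cancel_right] at h2
  exact h2.symm

private lemma ccA (i j : Fin n) : aA n i * bB n i * aA n j = 0 := by
  rcases eq_or_ne j i with rfl | h
  · rw [mul_assoc, BAs, ← mul_assoc, AA, zero_mul]
  · rw [mul_assoc, BA h, mul_zero]

private lemma ccB (i j : Fin n) : aA n i * bB n i * bB n j = 0 := by
  rw [mul_assoc, BB, mul_zero]

/-- the set of arrows and loops -/
def arrSet (n : ℕ) [NeZero n] : Set (Rn n) :=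
  {x | (∃ i, x = aA n i) ∨ (∃ i, x = bB n i) ∨ (∃ i, x = aA n i * bB n i)}

/-- the set of loops -/
def ccSet (n : ℕ) [NeZero n] : Set (Rn n) := {x | ∃ i, x = aA n i * bB n i}

private lemma gen_e (j : Fin n) :
    RingQuot.mkRingHom (QRel n) (FreeAlgebra.ι ℤ (Gen.e j)) = ee n j := rfl
private lemma gen_a (j : Fin n) :
    RingQuot.mkRingHom (QRel n) (FreeAlgebra.ι ℤ (Gen.a j)) = aA n j := rfl
private lemma gen_b (j : Fin n) :
    RingQuot.mkRingHom (QRel n) (FreeAlgebra.ι ℤ (Gen.b j)) = bB n j := rfl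

private lemma right_stable (N : Submodule ℤ (Rn n))
    (h : ∀ m ∈ N, ∀ g : Gen n, m * RingQuot.mkRingHom (QRel n) (FreeAlgebra.ι ℤ g) ∈ N)
    (v : FreeAlgebra ℤ (Gen n)) : ∀ m ∈ N, m * RingQuot.mkRingHom (QRel n) v ∈ N := by
  induction v with
  | grade0 r =>
    intro m hm
    have h1 : RingQuot.mkRingHom (QRel n) (algebraMap ℤ (FreeAlgebra ℤ (Gen n)) r)
        = (r : Rn n) := by
      exact (congrArg _ (eq_intCast (algebraMap ℤ (FreeAlgebra ℤ (Gen n))) r)).trans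
        (map_intCast _ r)
    have h2 : m * (r : Rn n) = r • m := by
      rw [zsmul_eq_mul, (Int.cast_commute r m).eq]
    rw [h1, h2]
    exact N.smul_mem r hm
  | grade1 g => intro m hm; exact h m hm g
  | mul a b ha hb =>
    intro m hm
    rw [map_mul, ← mul_assoc]
    exact hb _ (ha m hm)
  | add a b ha hb =>
    intro m hm
    rw [map_add, mul_add]
    exact add_mem (ha m hm) (hb m hm)

private lemma M_stab : ∀ m ∈ Submodule.span ℤ (arrSet n), ∀ g : Gen n,
    m * RingQuot.mkRingHom (QRel n) (FreeAlgebra.ι ℤ g) ∈ Submodule.span ℤ (arrSet n) := by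
  intro m hm g
  induction hm using Submodule.span_induction with
  | mem x hx =>
    have memA : ∀ i, aA n i ∈ Submodule.span ℤ (arrSet n) :=
      fun i => Submodule.subset_span (Or.inl ⟨i, rfl⟩)
    have memB : ∀ i, bB n i ∈ Submodule.span ℤ (arrSet n) :=
      fun i => Submodule.subset_span (Or.inr (Or.inl ⟨i, rfl⟩))
    have memC : ∀ i, aA n i * bB n i ∈ Submodule.span ℤ (arrSet n) :=
      fun i => Submodule.subset_span (Or.inr (Or.inr ⟨i, rfl⟩))
    rcases hx with ⟨i, rfl⟩ | ⟨i, rfl⟩ | ⟨i, rfl⟩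
    · cases g with
      | e j =>
        rw [gen_e]
        rcases eq_or_ne j (i + 1) with rfl | h
        · rw [aEs]; exact memA i
        · rw [AE h]; exact zero_mem _
      | a j => rw [gen_a, AA]; exact zero_mem _
      | b j =>
        rw [gen_b]
        rcases eq_or_ne j i with rfl | h
        · exact memC j
        · rw [AB h]; exact zero_mem _
    · cases g with
      | e j =>
        rw [gen_e]
        rcases eq_or_ne j i with rfl | h
        · rw [bEs]; exact memB j
        · rw [BE h]; exact zero_mem _
      | a j =>
        rw [gen_a]
        rcases eq_or_ne j i with rfl | h
        · rw [BAs]; exact memC (j + 1)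
        · rw [BA h]; exact zero_mem _
      | b j => rw [gen_b, BB]; exact zero_mem _
    · cases g with
      | e j =>
        rw [gen_e]
        rcases eq_or_ne j i with rfl | h
        · rw [mul_assoc, bEs]; exact memC j
        · rw [mul_assoc, BE h, mul_zero]; exact zero_mem _
      | a j => rw [gen_a, ccA]; exact zero_mem _
      | b j => rw [gen_b, ccB]; exact zero_mem _
  | zero => rw [zero_mul]; exact zero_mem _
  | add x y hx hy ihx ihy => rw [add_mul]; exact add_mem ihx ihy
  | smul a x hx ihx => rw [smul_mul_assoc]; exact Submodule.smul_mem _ a ihx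

private lemma C_stab : ∀ m ∈ Submodule.span ℤ (ccSet n), ∀ g : Gen n,
    m * RingQuot.mkRingHom (QRel n) (FreeAlgebra.ι ℤ g) ∈ Submodule.span ℤ (ccSet n) := by
  intro m hm g
  induction hm using Submodule.span_induction with
  | mem x hx =>
    obtain ⟨i, rfl⟩ := hx
    cases g with
    | e j =>
      rw [gen_e]
      rcases eq_or_ne j i with rfl | h
      · rw [mul_assoc, bEs]; exact Submodule.subset_span ⟨j, rfl⟩
      · rw [mul_assoc, BE h, mul_zero]; exact zero_mem _
    | a j => rw [gen_a, ccA]; exact zero_mem _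
    | b j => rw [gen_b, ccB]; exact zero_mem _
  | zero => rw [zero_mul]; exact zero_mem _
  | add x y hx hy ihx ihy => rw [add_mul]; exact add_mem ihx ihy
  | smul a x hx ihx => rw [smul_mul_assoc]; exact Submodule.smul_mem _ a ihx

private lemma M_mul_arrow {y : Rn n} {j : Fin n} (hy : y = aA n j ∨ y = bB n j) :
    ∀ m ∈ Submodule.span ℤ (arrSet n), m * y ∈ Submodule.span ℤ (ccSet n) := by
  intro m hm
  induction hm using Submodule.span_induction with
  | mem x hx =>
    rcases hx with ⟨i, rfl⟩ | ⟨i, rfl⟩ | ⟨i, rfl⟩ <;> rcases hy with rfl | rfl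
    · rw [AA]; exact zero_mem _
    · rcases eq_or_ne j i with rfl | h
      · exact Submodule.subset_span ⟨j, rfl⟩
      · rw [AB h]; exact zero_mem _
    · rcases eq_or_ne j i with rfl | h
      · rw [BAs]; exact Submodule.subset_span ⟨j + 1, rfl⟩
      · rw [BA h]; exact zero_mem _
    · rw [BB]; exact zero_mem _
    · rw [ccA]; exact zero_mem _
    · rw [ccB]; exact zero_mem _
  | zero => rw [zero_mul]; exact zero_mem _
  | add x y hx hy ihx ihy => rw [add_mul]; exact add_mem ihx ihy
  | smul a x hx ihx => rw [smul_mul_assoc]; exact Submodule.smul_mem _ a ihx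

private lemma C_kill {z : Rn n} {k : Fin n} (hz : z = aA n k ∨ z = bB n k) :
    ∀ m ∈ Submodule.span ℤ (ccSet n), m * z = 0 := by
  intro m hm
  induction hm using Submodule.span_induction with
  | mem x hx =>
    obtain ⟨i, rfl⟩ := hx
    rcases hz with rfl | rfl
    · exact ccA i k
    · exact ccB i k
  | zero => rw [zero_mul]
  | add x y hx hy ihx ihy => rw [add_mul, ihx, ihy, add_zero]
  | smul a x hx ihx => rw [smul_mul_assoc, ihx]; exact smul_zero _

end Aux

/-- in `R_n` every path of length `≥ 3` is zero; equivalently the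
two-sided ideal generated by the arrows is nilpotent of nilpotency index `3`:
any product containing three arrow factors vanishes. -/
theorem stmt11 (n : ℕ) [NeZero n] (hn : 3 ≤ n)
    (x y z : Rn n)
    (hx : ∃ i, x = aA n i ∨ x = bB n i)
    (hy : ∃ i, y = aA n i ∨ y = bB n i)
    (hz : ∃ i, z = aA n i ∨ z = bB n i)
    (r s : Rn n) :
    x * r * y * s * z = 0 := by
  obtain ⟨i, hxi⟩ := hx
  obtain ⟨j, hyj⟩ := hy
  obtain ⟨k, hzk⟩ := hz
  obtain ⟨v, rfl⟩ := RingQuot.mkRingHom_surjective (QRel n) r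
  obtain ⟨w, rfl⟩ := RingQuot.mkRingHom_surjective (QRel n) s
  have hxM : x ∈ Submodule.span ℤ (arrSet n) := by
    rcases hxi with rfl | rfl
    · exact Submodule.subset_span (Or.inl ⟨i, rfl⟩)
    · exact Submodule.subset_span (Or.inr (Or.inl ⟨i, rfl⟩))
  have h1 := right_stable _ M_stab v x hxM
  have h2 := M_mul_arrow hyj _ h1
  have h3 := right_stable _ C_stab w _ h2
  exact C_kill hzk _ h3
end
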